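/- Let ℍ be the continuous Heisenberg group of 3×3 real upper-triangular matrices with 1's on the diagonal, identified as a space with ℝ³ via the entries (a,b,c), with left Haar measure da db dc. For θ > 0 define W_θ³(a,b,c) = W_θ(a)W_θ(b)W_θ(c), where W_θ is the Wigner semicircle kernel. For k = (k_1,k_2,k_3) ∈ {0,1}³ let J_k = ∏_{l=1}^3 J_{k_l} with J_0 = (−∞,0) and J_1 = [0,∞), a local partition of ℍ at its identity with ∫_{J_k} W_θ³ da db dc = 1/8 for every k. If f ∈ L¹(ℍ) or f ∈ L^∞(ℍ) and x ∈ ℍ are such that for every k ∈ {0,1}³ the limit f(x,J_k) := lim_{y→e_ℍ, y∈J_k} f(y⁻¹x) exists, then lim_{θ→0⁺} (W_θ³ * f)(x) = (1/8) Σ_{k∈{0,1}³} f(x,J_k). -/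

import Mathlib

open MeasureTheory Filter Topology Real

/-- The Wigner semicircle kernel on `ℝ`: `W θ t = (2/(πθ²))√(θ² - t²)` for `-θ ≤ t ≤ θ`
and `0` otherwise. (In Lean `Real.sqrt` of a negative number is `0`, so this single formula
agrees with the piecewise definition.) -/
noncomputable def wigner (θ t : ℝ) : ℝ := 2 / (π * θ ^ 2) * Real.sqrt (θ ^ 2 - t ^ 2)

/-- The product kernel `W_θ³(a,b,c) = W_θ(a) W_θ(b) W_θ(c)` on the Heisenberg group
`ℍ ≅ ℝ³` (coordinates `(a,b,c)`, left Haar measure `da db dc`). -/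
noncomputable def wigner3 (θ : ℝ) (y : ℝ × ℝ × ℝ) : ℝ :=
  wigner θ y.1 * wigner θ y.2.1 * wigner θ y.2.2

/-- In the Heisenberg group (matrices `[[1,a,b],[0,1,c],[0,0,1]]`, with
`(a,b,c)·(a',b',c') = (a+a', b+b'+ac', c+c')`), the product
`y⁻¹ · x = (x₁-y₁, x₂-y₂+y₁y₃-y₁x₃, x₃-y₃)`. -/
def heisInvMul (y x : ℝ × ℝ × ℝ) : ℝ × ℝ × ℝ :=
  (x.1 - y.1, x.2.1 - y.2.1 + y.1 * y.2.2 - y.1 * x.2.2, x.2.2 - y.2.2)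

/-- The two half-lines `J_0 = (-∞,0)` and `J_1 = [0,∞)`. -/
def halfLine : Fin 2 → Set ℝ := ![Set.Iio 0, Set.Ici 0]

/-- The octant `J_k = ∏_{l=1}^3 J_{k_l} ⊆ ℍ ≅ ℝ³` for `k ∈ {0,1}³`. -/
def octant (k : Fin 3 → Fin 2) : Set (ℝ × ℝ × ℝ) :=
  {y | y.1 ∈ halfLine (k 0) ∧ y.2.1 ∈ halfLine (k 1) ∧ y.2.2 ∈ halfLine (k 2)}

/-!
`W_θ` is even with total mass one and `W_θ³` is a product kernel, so each octant `J_k` carries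
mass `1/8`. Since `W_θ³` vanishes outside the cube of half-side `θ` around `e`, the part of the
integral over `J_k` only sees values `f(y⁻¹x)` with `y ∈ J_k` close to `e`, which are close to
`f(x, J_k)`; summing over the eight octants gives the limit. The integrals exist because
`y ↦ y⁻¹x` preserves `da db dc` (in each fibre `a = const` it is a reflection composed with a
shear), so `y ↦ f(y⁻¹x)` is again in `L¹` or `L^∞`, while `W_θ³ ∈ L¹ ∩ L^∞`.
-/

open Set Function

section Wigner

variable {θ t : ℝ}

lemma wigner_nonneg (θ t : ℝ) : 0 ≤ wigner θ t := by
  unfold wigner; positivity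

lemma wigner_neg (θ t : ℝ) : wigner θ (-t) = wigner θ t := by
  simp [wigner]

lemma wigner_eq_zero_of_le_abs (hθ : 0 ≤ θ) (h : θ ≤ |t|) : wigner θ t = 0 := by
  have : θ ^ 2 - t ^ 2 ≤ 0 := by nlinarith [sq_abs t]
  rw [wigner, Real.sqrt_eq_zero'.mpr this, mul_zero]

lemma abs_lt_of_wigner_ne_zero (hθ : 0 ≤ θ) (h : wigner θ t ≠ 0) : |t| < θ :=
  not_le.mp fun h' => h (wigner_eq_zero_of_le_abs hθ h')

lemma continuous_wigner (θ : ℝ) : Continuous (wigner θ) := by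
  unfold wigner; fun_prop

lemma wigner_le (hθ : 0 < θ) (t : ℝ) : wigner θ t ≤ 2 / (π * θ) := by
  have : √(θ ^ 2 - t ^ 2) ≤ θ := Real.sqrt_le_iff.mpr ⟨hθ.le, by nlinarith [sq_nonneg t]⟩
  calc wigner θ t ≤ 2 / (π * θ ^ 2) * θ := by unfold wigner; gcongr
    _ = 2 / (π * θ) := by field_simp

lemma hasCompactSupport_wigner (hθ : 0 ≤ θ) : HasCompactSupport (wigner θ) :=
  .intro (isCompact_Icc (a := -θ) (b := θ)) fun _ ht =>
    wigner_eq_zero_of_le_abs hθ (not_lt.mp fun h => ht (abs_le.mp h.le))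

lemma integrable_wigner (hθ : 0 ≤ θ) : Integrable (wigner θ) :=
  (continuous_wigner θ).integrable_of_hasCompactSupport (hasCompactSupport_wigner hθ)

lemma intervalIntegral_sqrt_sq_sub_sq (hθ : 0 < θ) :
    ∫ t in (-θ)..θ, √(θ ^ 2 - t ^ 2) = π * θ ^ 2 / 2 := by
  have hscale : ∀ t : ℝ, √(θ ^ 2 - t ^ 2) = θ * √(1 - (t / θ) ^ 2) := by
    intro t
    rw [show (1 : ℝ) - (t / θ) ^ 2 = (θ ^ 2 - t ^ 2) / θ ^ 2 by field_simp,
      Real.sqrt_div' _ (by positivity), Real.sqrt_sq hθ.le]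
    field_simp
  simp_rw [hscale]
  rw [intervalIntegral.integral_const_mul,
    intervalIntegral.integral_comp_div (fun t => √(1 - t ^ 2)) hθ.ne', neg_div,
    div_self hθ.ne', integral_sqrt_one_sub_sq, smul_eq_mul]
  ring

lemma intervalIntegral_wigner (hθ : 0 < θ) : ∫ t in (-θ)..θ, wigner θ t = 1 := by
  simp only [wigner]
  rw [intervalIntegral.integral_const_mul, intervalIntegral_sqrt_sq_sub_sq hθ]
  field_simp

lemma intervalIntegral_wigner_neg_zero_and_zero (hθ : 0 < θ) :
    (∫ t in (-θ)..0, wigner θ t) = 1 / 2 ∧ ∫ t in (0 : ℝ)..θ, wigner θ t = 1 / 2 := by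
  have hsymm : ∫ t in (-θ)..0, wigner θ t = ∫ t in (0 : ℝ)..θ, wigner θ t := by
    simpa [wigner_neg] using
      (intervalIntegral.integral_comp_neg (a := 0) (b := θ) (wigner θ)).symm
  have hsum := intervalIntegral.integral_add_adjacent_intervals
    ((continuous_wigner θ).intervalIntegrable (μ := volume) (-θ) 0)
    ((continuous_wigner θ).intervalIntegrable 0 θ)
  rw [intervalIntegral_wigner hθ] at hsum
  constructor <;> linarith

lemma setIntegral_wigner_halfLine (hθ : 0 < θ) (i : Fin 2) :
    ∫ t in halfLine i, wigner θ t = 1 / 2 := by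
  obtain ⟨hneg, hpos⟩ := intervalIntegral_wigner_neg_zero_and_zero hθ
  fin_cases i
  · change ∫ t in Iio 0, wigner θ t = 1 / 2
    rw [← integral_Iic_eq_integral_Iio, ← hneg, intervalIntegral.integral_of_le (by linarith)]
    refine setIntegral_eq_of_subset_of_forall_sdiff_eq_zero measurableSet_Iic
      Ioc_subset_Iic_self ?_
    rintro t ⟨ht0, ht⟩
    refine wigner_eq_zero_of_le_abs hθ.le ?_
    simp only [mem_Iic, mem_Ioc, not_and] at ht0 ht
    rw [abs_of_nonpos ht0]
    linarith [not_lt.mp fun h => ht h ht0]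
  · change ∫ t in Ici 0, wigner θ t = 1 / 2
    rw [integral_Ici_eq_integral_Ioi, ← hpos, intervalIntegral.integral_of_le hθ.le]
    refine setIntegral_eq_of_subset_of_forall_sdiff_eq_zero measurableSet_Ioi
      Ioc_subset_Ioi_self ?_
    rintro t ⟨ht0, ht⟩
    refine wigner_eq_zero_of_le_abs hθ.le ?_
    simp only [mem_Ioi, mem_Ioc, not_and, not_le] at ht0 ht
    rw [abs_of_pos ht0]; exact (ht ht0).le

end Wigner

section Wigner3

variable {θ : ℝ}

lemma wigner3_nonneg (θ : ℝ) (y : ℝ × ℝ × ℝ) : 0 ≤ wigner3 θ y := by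
  unfold wigner3
  exact mul_nonneg (mul_nonneg (wigner_nonneg _ _) (wigner_nonneg _ _)) (wigner_nonneg _ _)

lemma continuous_wigner3 (θ : ℝ) : Continuous (wigner3 θ) := by
  have := continuous_wigner θ
  unfold wigner3; fun_prop

lemma wigner3_le (hθ : 0 < θ) (y : ℝ × ℝ × ℝ) : wigner3 θ y ≤ (2 / (π * θ)) ^ 3 := by
  have := wigner_nonneg θ
  have := wigner_le hθ
  unfold wigner3
  rw [pow_three, ← mul_assoc]
  gcongr <;> simp_all

lemma dist_zero_lt_of_wigner3_ne_zero (hθ : 0 ≤ θ) {y : ℝ × ℝ × ℝ} (h : wigner3 θ y ≠ 0) :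
    dist y 0 < θ := by
  simp only [wigner3, ne_eq, mul_eq_zero, not_or] at h
  obtain ⟨⟨h₁, h₂⟩, h₃⟩ := h
  simp only [Prod.dist_eq, Prod.fst_zero, Prod.snd_zero, Real.dist_eq, sub_zero, max_lt_iff]
  exact ⟨abs_lt_of_wigner_ne_zero hθ h₁, abs_lt_of_wigner_ne_zero hθ h₂,
    abs_lt_of_wigner_ne_zero hθ h₃⟩

lemma wigner3_eq_mul (θ : ℝ) :
    wigner3 θ = fun y : ℝ × ℝ × ℝ => wigner θ y.1 * (wigner θ y.2.1 * wigner θ y.2.2) := by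
  ext y; rw [wigner3, mul_assoc]

lemma integrable_wigner3 (hθ : 0 ≤ θ) : Integrable (wigner3 θ) := by
  rw [wigner3_eq_mul, Measure.volume_eq_prod, Measure.volume_eq_prod]
  exact (integrable_wigner hθ).mul_prod ((integrable_wigner hθ).mul_prod (integrable_wigner hθ))

lemma memLp_top_wigner3 (hθ : 0 < θ) : MemLp (wigner3 θ) ⊤ :=
  memLp_top_of_bound (continuous_wigner3 θ).aestronglyMeasurable _ <| ae_of_all _ fun y => by
    rw [Real.norm_of_nonneg (wigner3_nonneg θ y)]; exact wigner3_le hθ y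

end Wigner3

section Octant

lemma measurableSet_halfLine (i : Fin 2) : MeasurableSet (halfLine i) := by
  fin_cases i
  exacts [measurableSet_Iio, measurableSet_Ici]

lemma exists_mem_halfLine (t : ℝ) : ∃ i, t ∈ halfLine i :=
  (lt_or_ge t 0).elim (⟨0, ·⟩) (⟨1, ·⟩)

lemma eq_of_mem_halfLine {t : ℝ} {i j : Fin 2} (hi : t ∈ halfLine i) (hj : t ∈ halfLine j) :
    i = j := by
  fin_cases i <;> fin_cases j <;> simp_all [halfLine] <;> linarith

lemma octant_eq_prod (k : Fin 3 → Fin 2) :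
    octant k = halfLine (k 0) ×ˢ halfLine (k 1) ×ˢ halfLine (k 2) :=
  rfl

lemma measurableSet_octant (k : Fin 3 → Fin 2) : MeasurableSet (octant k) :=
  (measurableSet_halfLine _).prod ((measurableSet_halfLine _).prod (measurableSet_halfLine _))

lemma pairwise_disjoint_octant : Pairwise (Disjoint on octant) := by
  intro k k' hne
  refine Set.disjoint_left.mpr fun y hy hy' => hne (funext fun i => ?_)
  fin_cases i
  exacts [eq_of_mem_halfLine hy.1 hy'.1, eq_of_mem_halfLine hy.2.1 hy'.2.1,
    eq_of_mem_halfLine hy.2.2 hy'.2.2]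

lemma iUnion_octant : ⋃ k, octant k = univ := by
  refine eq_univ_of_forall fun y => mem_iUnion.mpr ?_
  obtain ⟨i₁, h₁⟩ := exists_mem_halfLine y.1
  obtain ⟨i₂, h₂⟩ := exists_mem_halfLine y.2.1
  obtain ⟨i₃, h₃⟩ := exists_mem_halfLine y.2.2
  exact ⟨![i₁, i₂, i₃], h₁, h₂, h₃⟩

lemma setIntegral_wigner3_octant {θ : ℝ} (hθ : 0 < θ) (k : Fin 3 → Fin 2) :
    ∫ y in octant k, wigner3 θ y = 1 / 8 := by
  rw [octant_eq_prod, wigner3_eq_mul, Measure.volume_eq_prod,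
    setIntegral_prod_mul (wigner θ) (fun p : ℝ × ℝ => wigner θ p.1 * wigner θ p.2),
    Measure.volume_eq_prod, setIntegral_prod_mul (wigner θ) (wigner θ)]
  simp only [setIntegral_wigner_halfLine hθ]
  norm_num

end Octant

lemma measurePreserving_heisInvMul_fiber (x : ℝ × ℝ × ℝ) (a : ℝ) :
    MeasurePreserving (fun q : ℝ × ℝ => (x.2.1 - q.1 + a * q.2 - a * x.2.2, x.2.2 - q.2)) := by
  have hskew : MeasurePreserving
      (fun p : ℝ × ℝ => (x.2.2 - p.1, (x.2.1 + a * p.1 - a * x.2.2) - p.2))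
      (volume.prod volume) (volume.prod volume) :=
    (Measure.measurePreserving_sub_left volume x.2.2).skew_product
      (g := fun c b => (x.2.1 + a * c - a * x.2.2) - b) (by fun_prop)
      (ae_of_all _ fun _ => (Measure.measurePreserving_sub_left volume _).map_eq)
  rw [Measure.volume_eq_prod]
  convert (Measure.measurePreserving_swap.comp hskew).comp Measure.measurePreserving_swap using 1
  ext q
  · simp only [Function.comp_apply, Prod.fst_swap, Prod.snd_swap, Prod.swap_prod_mk]
    ring
  · rfl

lemma measurePreserving_heisInvMul (x : ℝ × ℝ × ℝ) :
    MeasurePreserving (fun y => heisInvMul y x) := by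
  rw [Measure.volume_eq_prod]
  exact (Measure.measurePreserving_sub_left volume x.1).skew_product
    (g := fun a (q : ℝ × ℝ) => (x.2.1 - q.1 + a * q.2 - a * x.2.2, x.2.2 - q.2)) (by fun_prop)
    (ae_of_all _ fun a => (measurePreserving_heisInvMul_fiber x a).map_eq)

lemma MeasureTheory.Integrable.mul_of_integrable_or_memLp_top {α 𝕜 : Type*} [MeasurableSpace α]
    [NormedRing 𝕜] {μ : Measure α} {φ f : α → 𝕜} (hφ : Integrable φ μ) (hφ' : MemLp φ ⊤ μ)
    (hf : Integrable f μ ∨ MemLp f ⊤ μ) : Integrable (φ * f) μ :=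
  hf.elim (·.mul_of_top_right hφ') hφ.mul_of_top_left

section Kernel

variable {X : Type*} [MeasurableSpace X] [PseudoMetricSpace X] {μ : Measure X} {x₀ : X}
  {K : ℝ → X → ℝ} {g : X → ℂ}

lemma tendsto_setIntegral_kernel_mul {S : Set X} {c : ℝ} {L : ℂ} (hS : MeasurableSet S)
    (hK_nonneg : ∀ θ y, 0 ≤ K θ y) (hK_supp : ∀ θ > 0, ∀ y, K θ y ≠ 0 → dist y x₀ < θ)
    (hK_mass : ∀ θ > 0, ∫ y in S, K θ y ∂μ = c) (hK_int : ∀ θ > 0, IntegrableOn (K θ) S μ)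
    (hKg_int : ∀ θ > 0, IntegrableOn (fun y => (K θ y : ℂ) * g y) S μ)
    (hg : Tendsto g (𝓝[S] x₀) (𝓝 L)) :
    Tendsto (fun θ => ∫ y in S, (K θ y : ℂ) * g y ∂μ) (𝓝[>] 0) (𝓝 (c * L)) := by
  rw [Metric.tendsto_nhds]
  intro ε hε
  set ε' := ε / (|c| + 1)
  obtain ⟨δ, hδ, hgδ⟩ := Metric.tendsto_nhdsWithin_nhds.mp hg ε' (by positivity)
  filter_upwards [Ioo_mem_nhdsGT hδ] with θ ⟨hθ, hθδ⟩
  have hpoint : ∀ y ∈ S, ‖(K θ y : ℂ) * g y - (K θ y : ℂ) * L‖ ≤ ε' * K θ y := by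
    intro y hy
    rw [← mul_sub, norm_mul, Complex.norm_real, Real.norm_of_nonneg (hK_nonneg θ y), mul_comm,
      ← dist_eq_norm]
    rcases eq_or_ne (K θ y) 0 with h | h
    · simp [h]
    · exact mul_le_mul_of_nonneg_right
        (hgδ hy ((hK_supp θ hθ y h).trans hθδ)).le (hK_nonneg θ y)
  have hmass : ∫ y in S, (K θ y : ℂ) * L ∂μ = c * L := by
    rw [integral_mul_const, integral_complex_ofReal, hK_mass θ hθ]
  calc dist (∫ y in S, (K θ y : ℂ) * g y ∂μ) (c * L)
      = ‖∫ y in S, ((K θ y : ℂ) * g y - (K θ y : ℂ) * L) ∂μ‖ := by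
        rw [dist_eq_norm, ← hmass]
        exact congrArg _ (integral_sub (hKg_int θ hθ) ((hK_int θ hθ).ofReal.mul_const L)).symm
    _ ≤ ∫ y in S, ε' * K θ y ∂μ :=
        norm_integral_le_of_norm_le ((hK_int θ hθ).const_mul ε')
          ((ae_restrict_iff' hS).mpr (ae_of_all _ hpoint))
    _ = ε' * c := by rw [integral_const_mul, hK_mass θ hθ]
    _ ≤ ε' * |c| := by gcongr; exact le_abs_self c
    _ < ε := by
        rw [div_mul_eq_mul_div, div_lt_iff₀ (by positivity)]
        nlinarith

lemma tendsto_integral_kernel_mul_of_partition {ι : Type*} [Fintype ι] {S : ι → Set X}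
    {c : ι → ℝ} {L : ι → ℂ} (hS : ∀ k, MeasurableSet (S k)) (hS_disj : Pairwise (Disjoint on S))
    (hS_cover : ⋃ k, S k = univ)
    (hK_nonneg : ∀ θ y, 0 ≤ K θ y) (hK_supp : ∀ θ > 0, ∀ y, K θ y ≠ 0 → dist y x₀ < θ)
    (hK_mass : ∀ θ > 0, ∀ k, ∫ y in S k, K θ y ∂μ = c k) (hK_int : ∀ θ > 0, Integrable (K θ) μ)
    (hKg_int : ∀ θ > 0, Integrable (fun y => (K θ y : ℂ) * g y) μ)
    (hg : ∀ k, Tendsto g (𝓝[S k] x₀) (𝓝 (L k))) :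
    Tendsto (fun θ => ∫ y, (K θ y : ℂ) * g y ∂μ) (𝓝[>] 0) (𝓝 (∑ k, c k * L k)) := by
  have hsplit : ∀ θ > 0, ∑ k, ∫ y in S k, (K θ y : ℂ) * g y ∂μ = ∫ y, (K θ y : ℂ) * g y ∂μ := by
    intro θ hθ
    rw [← integral_iUnion_fintype hS hS_disj fun k => (hKg_int θ hθ).integrableOn, hS_cover,
      setIntegral_univ]
  refine Tendsto.congr' ?_ (tendsto_finsetSum _ fun k _ =>
    tendsto_setIntegral_kernel_mul (hS k) hK_nonneg hK_supp (fun θ hθ => hK_mass θ hθ k)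
      (fun θ hθ => (hK_int θ hθ).integrableOn) (fun θ hθ => (hKg_int θ hθ).integrableOn) (hg k))
  filter_upwards [self_mem_nhdsWithin] with θ hθ using hsplit θ hθ

end Kernel

/-- Fejér-type theorem for the Heisenberg group `ℍ`: the octants `J_k` form a local
partition of `ℍ` at its identity with `∫_{J_k} W_θ³ da db dc = 1/8` for every `k`, and if
`f ∈ L¹(ℍ)` or `f ∈ L^∞(ℍ)` is such that, at a point `x` of `ℍ`, each limit
`f(x, J_k) = lim_{y→e, y ∈ J_k} f(y⁻¹x)` exists, then
`(W_θ³ * f)(x) → (1/8) ∑_{k ∈ {0,1}³} f(x, J_k)` as `θ → 0⁺`. -/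
theorem heisenberg_fejer (f : ℝ × ℝ × ℝ → ℂ)
    (hf : Integrable f volume ∨ MemLp f ⊤ volume)
    (x : ℝ × ℝ × ℝ) (L : (Fin 3 → Fin 2) → ℂ)
    (hL : ∀ k : Fin 3 → Fin 2, Tendsto (fun y => f (heisInvMul y x))
      (𝓝[octant k] ((0 : ℝ), (0 : ℝ), (0 : ℝ))) (𝓝 (L k))) :
    (∀ θ > (0 : ℝ), ∀ k : Fin 3 → Fin 2,
      (∫ y in octant k, wigner3 θ y) = 1/8) ∧
    Tendsto (fun θ : ℝ => ∫ y, (wigner3 θ y : ℂ) * f (heisInvMul y x))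
      (𝓝[>] 0) (𝓝 ((1/8) * ∑ k : Fin 3 → Fin 2, L k)) := by
  have hmass : ∀ θ > (0 : ℝ), ∀ k, ∫ y in octant k, wigner3 θ y = 1 / 8 :=
    fun _ hθ => setIntegral_wigner3_octant hθ
  refine ⟨hmass, ?_⟩
  have hT := measurePreserving_heisInvMul x
  have hfT : Integrable (fun y => f (heisInvMul y x)) ∨ MemLp (fun y => f (heisInvMul y x)) ⊤ :=
    hf.imp hT.integrable_comp_of_integrable (·.comp_measurePreserving hT)
  have hconv := tendsto_integral_kernel_mul_of_partition measurableSet_octant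
    pairwise_disjoint_octant iUnion_octant wigner3_nonneg
    (fun θ hθ _ => dist_zero_lt_of_wigner3_ne_zero hθ.le) hmass
    (fun θ hθ => integrable_wigner3 hθ.le)
    (fun θ hθ => (integrable_wigner3 hθ.le).ofReal.mul_of_integrable_or_memLp_top
      (memLp_top_wigner3 hθ).ofReal hfT) hL
  convert hconv using 2
  push_cast
  rw [Finset.mul_sum]
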